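/- Every (Z_2^{2n+1})_ev-graded Lie superalgebra (the even part of a Z_2^{2n+1}-graded Lie superalgebra) is isomorphic, as a graded algebra, to a Z_2^{2n}-graded Lie algebra: regrading via the bijection f : Z_2^{2n} → (Z_2^{2n+1})_ev converts the sign (−1)^{f(α)·f(β)} into the sign (−1)^{Σ_i |α_i × β_i|} used in the definition of a Z_2^{2n}-graded Lie algebra. -/

import Mathlib

/-- `|v| = v₁ + v₂ mod 2` for a pair `v ∈ Z_2^2`. -/
def pabs (v : ZMod 2 × ZMod 2) : ZMod 2 := v.1 + v.2

/-- `|v × w|`: the mod-2 determinant of two 2-vectors. -/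
def pcross (v w : ZMod 2 × ZMod 2) : ZMod 2 := v.1 * w.2 + v.2 * w.1

/-- The mod-2 dot product on `Z_2^{2n}` written as `n` consecutive pairs. -/
def pdot {n : ℕ} (a b : Fin n → ZMod 2 × ZMod 2) : ZMod 2 :=
  ∑ i, ((a i).1 * (b i).1 + (a i).2 * (b i).2)

/-- The mod-2 dot product on `Z_2^{2n+1}`, modelled as `(Z_2^2)^n × Z_2`. -/
def fdot {n : ℕ} (a b : (Fin n → ZMod 2 × ZMod 2) × ZMod 2) : ZMod 2 :=
  pdot a.1 b.1 + a.2 * b.2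

/-- The map `f : Z_2^{2n} → Z_2^{2n+1}`,
`f(α) = (α₁, α₂ + |α₁|(1,1), …, αᵢ + Σ_{k<i}|α_k|(1,1), …, Σ_{k≤n}|α_k|)`. -/
def fmap {n : ℕ} (α : Fin n → ZMod 2 × ZMod 2) : (Fin n → ZMod 2 × ZMod 2) × ZMod 2 :=
  (fun i => α i + (∑ k ∈ Finset.Iio i, pabs (α k), ∑ k ∈ Finset.Iio i, pabs (α k)),
   ∑ k, pabs (α k))

/-!
The regrading map `f` is additive, so the grading condition transfers directly. For the signs,
write `s_i = Σ_{k<i}|α_k|` and `t_i = Σ_{k<i}|β_k|`. The `i`-th pair of `f(α)·f(β)` is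
`α_i·β_i + s_i|β_i| + |α_i|t_i` mod 2, while the last coordinate contributes
`(Σ|α_k|)(Σ|β_k|) = Σ_i (s_i|β_i| + |α_i|t_i + |α_i||β_i|)`. The shift terms cancel, leaving
`Σ_i (α_i·β_i + |α_i||β_i|) = Σ_i |α_i × β_i|`.
-/

open Finset

theorem Finset.sum_mul_sum_eq_sum_Iio {ι R : Type*} [Fintype ι] [LinearOrder ι]
    [LocallyFiniteOrderBot ι] [LocallyFiniteOrderTop ι] [CommSemiring R] (a b : ι → R) :
    (∑ i, a i) * (∑ i, b i) =
      ∑ i, ((∑ k ∈ Iio i, a k) * b i + a i * (∑ k ∈ Iio i, b k) + a i * b i) := by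
  have hsplit : ∀ i, ∑ j, b j = b i + (∑ j ∈ Ioi i, b j + ∑ j ∈ Iio i, b j) := fun i => by
    rw [Fintype.sum_eq_add_sum_compl i, ← Ioi_disjUnion_Iio, sum_disjUnion]
  have hswap : ∑ i, ∑ j ∈ Ioi i, a i * b j = ∑ j, (∑ i ∈ Iio j, a i) * b j := by
    simp_rw [sum_mul]
    exact sum_comm' fun i j => by simp
  calc (∑ i, a i) * (∑ i, b i)
      = ∑ i, (a i * b i + ∑ j ∈ Ioi i, a i * b j + a i * ∑ j ∈ Iio i, b j) := by
        rw [sum_mul]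
        refine sum_congr rfl fun i _ => ?_
        rw [hsplit i, ← mul_sum]
        ring
    _ = _ := by
        simp only [sum_add_distrib, hswap]
        ring

lemma pabs_add (v w : ZMod 2 × ZMod 2) : pabs (v + w) = pabs v + pabs w := by
  simp only [pabs, Prod.fst_add, Prod.snd_add]
  ring

lemma fmap_add {n : ℕ} (α β : Fin n → ZMod 2 × ZMod 2) :
    fmap (α + β) = fmap α + fmap β := by
  ext i <;> simp only [fmap, Pi.add_apply, pabs_add, sum_add_distrib, Prod.fst_add,
    Prod.snd_add] <;> ring

lemma fdot_fmap {n : ℕ} (α β : Fin n → ZMod 2 × ZMod 2) :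
    fdot (fmap α) (fmap β) = ∑ i, pcross (α i) (β i) := by
  have hpair : ∀ s t a₁ a₂ b₁ b₂ : ZMod 2,
      (a₁ + s) * (b₁ + t) + (a₂ + s) * (b₂ + t) +
        (s * (b₁ + b₂) + (a₁ + a₂) * t + (a₁ + a₂) * (b₁ + b₂)) = a₁ * b₂ + a₂ * b₁ := by
    decide
  rw [fdot, pdot, fmap, fmap, sum_mul_sum_eq_sum_Iio, ← sum_add_distrib]
  exact sum_congr rfl fun i _ => hpair _ _ _ _ _ _

theorem stmt11_general {n : ℕ} {V : Type*} [AddCommGroup V] [Module ℂ V]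
    (g : ((Fin n → ZMod 2 × ZMod 2) × ZMod 2) → Submodule ℂ V)
    (br : V →ₗ[ℂ] V →ₗ[ℂ] V)
    (hgrade : ∀ a b, ∀ x ∈ g a, ∀ y ∈ g b, br x y ∈ g (a + b))
    (hanti : ∀ a b, ∀ x ∈ g a, ∀ y ∈ g b,
      br x y = (-((-1 : ℤ) ^ (fdot a b).val)) • br y x)
    (hjac : ∀ a b c, ∀ x ∈ g a, ∀ y ∈ g b, ∀ z ∈ g c,
      br x (br y z) = br (br x y) z + ((-1 : ℤ) ^ (fdot a b).val) • br y (br x z)) :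
    (∀ α β : Fin n → ZMod 2 × ZMod 2,
      ∀ x ∈ g (fmap α), ∀ y ∈ g (fmap β), br x y ∈ g (fmap (α + β))) ∧
    (∀ α β : Fin n → ZMod 2 × ZMod 2, ∀ x ∈ g (fmap α), ∀ y ∈ g (fmap β),
      br x y = (-((-1 : ℤ) ^ (∑ i, pcross (α i) (β i)).val)) • br y x) ∧
    (∀ α β γ : Fin n → ZMod 2 × ZMod 2,
      ∀ x ∈ g (fmap α), ∀ y ∈ g (fmap β), ∀ z ∈ g (fmap γ),
        br x (br y z) =
          br (br x y) z + ((-1 : ℤ) ^ (∑ i, pcross (α i) (β i)).val) • br y (br x z)) := by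
  refine ⟨fun α β x hx y hy => ?_, fun α β x hx y hy => ?_,
    fun α β γ x hx y hy z hz => ?_⟩
  · rw [fmap_add]
    exact hgrade _ _ x hx y hy
  · rw [← fdot_fmap]
    exact hanti _ _ x hx y hy
  · rw [← fdot_fmap]
    exact hjac _ _ _ x hx y hy z hz

/-- a `(Z_2^{2n+1})_ev`-graded Lie superalgebra (supported on even degrees,
with signs `(-1)^(a·b)`) becomes, after regrading along `f : Z_2^{2n} → (Z_2^{2n+1})_ev`,
a `Z_2^{2n}`-graded Lie algebra: closure in degree `α+β`, and antisymmetry and Jacobi hold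
with the signs `(-1)^(Σᵢ |αᵢ × βᵢ|)`. -/
theorem stmt11 {n : ℕ} {V : Type*} [AddCommGroup V] [Module ℂ V]
    (g : ((Fin n → ZMod 2 × ZMod 2) × ZMod 2) → Submodule ℂ V)
    (br : V →ₗ[ℂ] V →ₗ[ℂ] V)
    (hsupp : ∀ b, fdot b b ≠ 0 → g b = ⊥)
    (hgrade : ∀ a b, ∀ x ∈ g a, ∀ y ∈ g b, br x y ∈ g (a + b))
    (hanti : ∀ a b, ∀ x ∈ g a, ∀ y ∈ g b,
      br x y = (-((-1 : ℤ) ^ (fdot a b).val)) • br y x)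
    (hjac : ∀ a b c, ∀ x ∈ g a, ∀ y ∈ g b, ∀ z ∈ g c,
      br x (br y z) = br (br x y) z + ((-1 : ℤ) ^ (fdot a b).val) • br y (br x z)) :
    (∀ α β : Fin n → ZMod 2 × ZMod 2,
      ∀ x ∈ g (fmap α), ∀ y ∈ g (fmap β), br x y ∈ g (fmap (α + β))) ∧
    (∀ α β : Fin n → ZMod 2 × ZMod 2, ∀ x ∈ g (fmap α), ∀ y ∈ g (fmap β),
      br x y = (-((-1 : ℤ) ^ (∑ i, pcross (α i) (β i)).val)) • br y x) ∧
    (∀ α β γ : Fin n → ZMod 2 × ZMod 2,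
      ∀ x ∈ g (fmap α), ∀ y ∈ g (fmap β), ∀ z ∈ g (fmap γ),
        br x (br y z) =
          br (br x y) z + ((-1 : ℤ) ^ (∑ i, pcross (α i) (β i)).val) • br y (br x z)) :=
  stmt11_general g br hgrade hanti hjac
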